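/- If the finite multiindex β is a permutation of the finite multiindex α, then β∖α = α∖β = ∅ and s_α* s_β = q(α,β)·1; moreover, for every finite multiindex δ one has q((α δ),(β δ)) = q(α,β) and s_{(αδ)}* s_{(βδ)} = q(α,β)·1, where (αδ) denotes the concatenation of α and δ. -/

import Mathlib

/-!
Moving `s_a*` rightwards through `s_β` with `s_a* s_b = q_{ab} s_b s_a*` collects the factor
`q(a,β)` until it meets the first `s_a`, where `s_a* s_a = 1` absorbs it and leaves `s_{β∖a}`.
Peeling off the letters of `α` one at a time thus gives `s_α* s_β = q(α,β)` whenever `β` is a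
permutation of `α`. Appending a common tail `δ` changes nothing: each letter of `α` is met inside
`β` before `δ` is reached, and what remains at the end is `q(δ,δ) = 1`.
-/

open scoped BigOperators InnerProductSpace

namespace QCstar

variable {d : ℕ}

/-- `q(j,α)`: product of `q j a` over the prefix of `α` preceding the first
occurrence of `j` (the whole list if `j` does not occur in `α`). -/
def qOne (q : Fin d → Fin d → ℂ) (j : Fin d) (α : List (Fin d)) : ℂ :=
  ((α.takeWhile fun a => a ≠ j).map (q j)).prod

/-- `q(α,β)` for finite multiindices, defined by recursion on `α`. -/
def qMul (q : Fin d → Fin d → ℂ) : List (Fin d) → List (Fin d) → ℂ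
  | [], _ => 1
  | a :: α, β => qOne q a β * qMul q α (β.erase a)

/-- `s_α = s_{α₁} ⋯ s_{α_m}`. -/
def sWord {A : Type*} [Monoid A] (s : Fin d → A) (α : List (Fin d)) : A :=
  (α.map s).prod

/-- The shift on infinite multiindices. -/
def shift (β : ℕ → Fin d) : ℕ → Fin d := fun n => β (n + 1)

/-- The finite multiindex `(β₁,…,β_m)`. -/
def prefixList (β : ℕ → Fin d) (m : ℕ) : List (Fin d) :=
  List.ofFn fun i : Fin m => β i

/-- `β ∼ α`: the tails agree up to a shift. -/
def equivTail (β α : ℕ → Fin d) : Prop := ∃ m n, shift^[m] β = shift^[n] α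

/-- `q(α,β)` for infinite multiindices: the limit of `q` of the prefixes. -/
noncomputable def qInf (q : Fin d → Fin d → ℂ) (α β : ℕ → Fin d) : ℂ :=
  Filter.limUnder Filter.atTop fun m => qMul q (prefixList α m) (prefixList β m)

/-- `(j, β₁, β₂, …)`. -/
def consSeq (j : Fin d) (β : ℕ → Fin d) : ℕ → Fin d
  | 0 => j
  | n + 1 => β n

open Classical in
/-- `β ∖ j` for an infinite multiindex: remove the first occurrence of `j`. -/
noncomputable def eraseInf (j : Fin d) (β : ℕ → Fin d) : ℕ → Fin d :=
  if h : ∃ n, β n = j then fun k => if k < Nat.find h then β k else β (k + 1) else β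

open Classical in
/-- `q(j,β)` for an infinite multiindex containing `j`. -/
noncomputable def qOneInf (q : Fin d → Fin d → ℂ) (j : Fin d) (β : ℕ → Fin d) : ℂ :=
  if h : ∃ n, β n = j then ∏ k ∈ Finset.range (Nat.find h), q j (β k) else 0

/-- Entries of the Fock form. -/
noncomputable def fockEntry (q : Fin d → Fin d → ℂ) (α β : List (Fin d)) : ℂ :=
  if β.Perm α then qMul q β α else 0

/-- The Fock sesquilinear form on the free complex vector space with basis the
finite multiindices (conjugate-linear in the first argument). -/
noncomputable def fockForm (q : Fin d → Fin d → ℂ) (x y : List (Fin d) →₀ ℂ) : ℂ :=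
  ∑ α ∈ x.support, ∑ β ∈ y.support, (starRingEnd ℂ) (x α) * y β * fockEntry q α β

theorem _root_.List.Perm.diff_eq_nil {α : Type*} [DecidableEq α] {l₁ l₂ : List α}
    (h : l₁.Perm l₂) : l₁.diff l₂ = [] := by
  rw [← Multiset.coe_eq_zero, ← Multiset.coe_sub, Multiset.coe_eq_coe.2 h, tsub_self]

section Coefficients

variable (q : Fin d → Fin d → ℂ)

theorem qOne_cons_self (j : Fin d) (β : List (Fin d)) : qOne q j (j :: β) = 1 := by
  simp [qOne]

theorem qOne_cons_of_ne {j b : Fin d} (hb : b ≠ j) (β : List (Fin d)) :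
    qOne q j (b :: β) = q j b * qOne q j β := by
  simp [qOne, hb]

theorem qOne_append_of_mem {j : Fin d} {β : List (Fin d)} (h : j ∈ β) (δ : List (Fin d)) :
    qOne q j (β ++ δ) = qOne q j β := by
  induction β with
  | nil => simp at h
  | cons b γ ih =>
    by_cases hb : b = j
    · subst hb
      simp only [List.cons_append, qOne_cons_self]
    · have hγ : j ∈ γ := (List.mem_cons.1 h).resolve_left (Ne.symm hb)
      rw [List.cons_append, qOne_cons_of_ne q hb, qOne_cons_of_ne q hb, ih hγ]

theorem qMul_self (α : List (Fin d)) : qMul q α α = 1 := by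
  induction α with
  | nil => rfl
  | cons a α ih => rw [qMul, qOne_cons_self, List.erase_cons_head, ih, one_mul]

theorem qMul_append_of_perm {α β : List (Fin d)} (hperm : β.Perm α) (δ : List (Fin d)) :
    qMul q (α ++ δ) (β ++ δ) = qMul q α β := by
  induction α generalizing β with
  | nil =>
    rw [hperm.eq_nil, List.nil_append, qMul_self, qMul]
  | cons a α ih =>
    have ha : a ∈ β := hperm.mem_iff.2 List.mem_cons_self
    have hperm' : (β.erase a).Perm α := by simpa using hperm.erase a
    rw [List.cons_append, qMul, qOne_append_of_mem q ha, List.erase_append_left δ ha,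
      ih hperm', qMul]

end Coefficients

theorem sWord_cons {A : Type*} [Monoid A] (s : Fin d → A) (a : Fin d) (α : List (Fin d)) :
    sWord s (a :: α) = s a * sWord s α :=
  List.prod_cons

section Words

variable {A : Type*} [Semiring A] [StarMul A] [Algebra ℂ A]

theorem star_mul_sWord_of_mem (q : Fin d → Fin d → ℂ) (s : Fin d → A)
    (hiso : ∀ i, star (s i) * s i = 1)
    (hrel : ∀ i j : Fin d, i ≠ j → star (s i) * s j = q i j • (s j * star (s i)))
    {a : Fin d} {β : List (Fin d)} (h : a ∈ β) :
    star (s a) * sWord s β = qOne q a β • sWord s (β.erase a) := by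
  induction β with
  | nil => simp at h
  | cons b γ ih =>
    by_cases hb : b = a
    · subst hb
      rw [sWord_cons, ← mul_assoc, hiso, one_mul, qOne_cons_self, one_smul,
        List.erase_cons_head]
    · have hγ : a ∈ γ := (List.mem_cons.1 h).resolve_left (Ne.symm hb)
      rw [sWord_cons, ← mul_assoc, hrel a b (Ne.symm hb), smul_mul_assoc, mul_assoc, ih hγ,
        mul_smul_comm, List.erase_cons_tail (by simpa using hb), sWord_cons,
        qOne_cons_of_ne q hb, smul_smul, mul_comm (q a b)]

theorem star_sWord_mul_sWord_of_perm (q : Fin d → Fin d → ℂ) (s : Fin d → A)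
    (hiso : ∀ i, star (s i) * s i = 1)
    (hrel : ∀ i j : Fin d, i ≠ j → star (s i) * s j = q i j • (s j * star (s i)))
    {α β : List (Fin d)} (hperm : β.Perm α) :
    star (sWord s α) * sWord s β = qMul q α β • (1 : A) := by
  induction α generalizing β with
  | nil => simp [hperm.eq_nil, sWord, qMul]
  | cons a α ih =>
    have ha : a ∈ β := hperm.mem_iff.2 List.mem_cons_self
    have hperm' : (β.erase a).Perm α := by simpa using hperm.erase a
    rw [sWord_cons, star_mul, mul_assoc, star_mul_sWord_of_mem q s hiso hrel ha,
      mul_smul_comm, ih hperm', smul_smul, qMul, mul_comm (qOne q a β)]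

end Words

theorem statement3_general {d : ℕ} (q : Fin d → Fin d → ℂ)
    {A : Type*} [NormedRing A] [StarRing A]
    [NormedAlgebra ℂ A]
    (s : Fin d → A) (hiso : ∀ i, star (s i) * s i = 1)
    (hrel : ∀ i j : Fin d, i ≠ j → star (s i) * s j = q i j • (s j * star (s i)))
    (α β : List (Fin d)) (hperm : β.Perm α) :
    β.diff α = [] ∧ α.diff β = [] ∧
    star (sWord s α) * sWord s β = qMul q α β • (1 : A) ∧
    ∀ δ : List (Fin d),
      qMul q (α ++ δ) (β ++ δ) = qMul q α β ∧
      star (sWord s (α ++ δ)) * sWord s (β ++ δ) = qMul q α β • (1 : A) := by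
  refine ⟨hperm.diff_eq_nil, hperm.symm.diff_eq_nil,
    star_sWord_mul_sWord_of_perm q s hiso hrel hperm,
    fun δ => ⟨qMul_append_of_perm q hperm δ, ?_⟩⟩
  rw [star_sWord_mul_sWord_of_perm q s hiso hrel (hperm.append_right δ),
    qMul_append_of_perm q hperm δ]

theorem statement3 {d : ℕ} (hd : 2 ≤ d) (q : Fin d → Fin d → ℂ)
    (hsym : ∀ i j : Fin d, i ≠ j → q i j = (starRingEnd ℂ) (q j i))
    (hlt : ∀ i j : Fin d, i ≠ j → ‖q i j‖ < 1)
    {A : Type*} [NormedRing A] [StarRing A] [CStarRing A] [CompleteSpace A]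
    [NormedAlgebra ℂ A] [StarModule ℂ A]
    (s : Fin d → A) (hiso : ∀ i, star (s i) * s i = 1)
    (hrel : ∀ i j : Fin d, i ≠ j → star (s i) * s j = q i j • (s j * star (s i)))
    (α β : List (Fin d)) (hperm : β.Perm α) :
    β.diff α = [] ∧ α.diff β = [] ∧
    star (sWord s α) * sWord s β = qMul q α β • (1 : A) ∧
    ∀ δ : List (Fin d),
      qMul q (α ++ δ) (β ++ δ) = qMul q α β ∧
      star (sWord s (α ++ δ)) * sWord s (β ++ δ) = qMul q α β • (1 : A) :=
  statement3_general q s hiso hrel α β hperm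

end QCstar
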